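/- Under the kernel hypotheses, for every x₀ ∈ ℂ \ S and every i ∈ {1,…,m}: ħ K(x₀, s_i) = ∑_{j=1}^m A_{ij}/(x₀ − s_j)². -/

import Mathlib

/-!
Multiply the differential equation by `x - sᵢ` and let `x → sᵢ`. Since `K` is holomorphic at
`sᵢ`, `K'` is continuous there and the left side tends to `0`. On the right only the simple poles
at `sᵢ` survive: `(x - sᵢ) ω(x) → ħ` and `(x - sᵢ) G(x₀, x) → 2 ∑ⱼ Aᵢⱼ / (x₀ - sⱼ)²`, so the right
side tends to `2ħ K(x₀, sᵢ) - 2 ∑ⱼ Aᵢⱼ / (x₀ - sⱼ)²`.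
-/

open Filter Topology Finset Polynomial

section Residues

variable {𝕜 : Type*} [NontriviallyNormedField 𝕜]

theorem tendsto_sub_mul_nhdsNE_zero {g : 𝕜 → 𝕜} {c : 𝕜} (hg : ContinuousAt g c) :
    Tendsto (fun x => (x - c) * g x) (𝓝[≠] c) (𝓝 0) := by
  have h : ContinuousAt (fun x => (x - c) * g x) c := (continuous_sub_right c).continuousAt.mul hg
  simpa using h.tendsto.mono_left nhdsWithin_le_nhds

theorem tendsto_sub_mul_div_sub_self (a c : 𝕜) :
    Tendsto (fun x => (x - c) * (a / (x - c))) (𝓝[≠] c) (𝓝 a) := by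
  refine tendsto_const_nhds.congr' ?_
  filter_upwards [self_mem_nhdsWithin] with x hx
  rw [mul_div_cancel₀ _ (sub_ne_zero.2 hx)]

theorem tendsto_sub_mul_sum_div_sub {ι : Type*} [Fintype ι] [DecidableEq ι] {s : ι → 𝕜}
    (hs : Function.Injective s) (a : ι → 𝕜) (i : ι) :
    Tendsto (fun x => (x - s i) * ∑ j, a j / (x - s j)) (𝓝[≠] s i) (𝓝 (a i)) := by
  have hterm : ∀ j, Tendsto (fun x => (x - s i) * (a j / (x - s j))) (𝓝[≠] s i)
      (𝓝 (if j = i then a j else 0)) := by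
    intro j
    split_ifs with hji
    · subst hji
      exact tendsto_sub_mul_div_sub_self _ _
    · exact tendsto_sub_mul_nhdsNE_zero <| continuousAt_const.div
        (continuous_sub_right _).continuousAt (sub_ne_zero.2 (hs.ne hji).symm)
  simpa [Finset.mul_sum] using tendsto_finsetSum univ fun j _ => hterm j

theorem eventually_nhdsNE_forall_ne {ι X : Type*} [Finite ι] [TopologicalSpace X] [T1Space X]
    {s : ι → X} (hs : Function.Injective s) (i : ι) : ∀ᶠ x in 𝓝[≠] s i, ∀ j, x ≠ s j := by
  refine eventually_all.2 fun j => ?_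
  obtain rfl | hji := eq_or_ne j i
  · exact self_mem_nhdsWithin
  · exact eventually_nhdsWithin_of_eventually_nhds (eventually_ne_nhds (hs.ne hji).symm)

end Residues

theorem kernel_value_at_si (m : ℕ) (hbar : ℂ) (V : Polynomial ℂ)
    (s : Fin m → ℂ) (hs : Function.Injective s)
    (A : Matrix (Fin m) (Fin m) ℂ)
    (x₀ : ℂ) (hx₀ : ∀ i, x₀ ≠ s i)
    (U : Set ℂ) (K : ℂ → ℂ) (hU : IsOpen U) (hSU : ∀ i, s i ∈ U)
    (hK : DifferentiableOn ℂ K U)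
    (hODE : ∀ x ∈ U, (∀ i, x ≠ s i) → x ≠ x₀ →
      hbar * deriv K x
        = (2 * (hbar * ∑ i, 1 / (x - s i)) - V.derivative.eval x) * K x
          - (1 / (x - x₀) + 2 * ∑ i, ∑ j, A i j / ((x - s i) * (x₀ - s j) ^ 2))) :
    ∀ i, hbar * K (s i) = ∑ j, A i j / (x₀ - s j) ^ 2 := by
  intro i
  have hU_nhds : U ∈ 𝓝 (s i) := hU.mem_nhds (hSU i)
  set C : Fin m → ℂ := fun k => ∑ j, A k j / (x₀ - s j) ^ 2
  have hG : ∀ x, ∑ k, ∑ j, A k j / ((x - s k) * (x₀ - s j) ^ 2) = ∑ k, C k / (x - s k) :=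
    fun x => by simp_rw [C, Finset.sum_div, div_mul_eq_div_div_swap]
  have hLHS : Tendsto (fun x => (x - s i) * (hbar * deriv K x)) (𝓝[≠] s i) (𝓝 0) :=
    tendsto_sub_mul_nhdsNE_zero <| continuousAt_const.mul
      ((hK.analyticOnNhd hU).deriv (s i) (hSU i)).continuousAt
  have hω := (tendsto_sub_mul_sum_div_sub hs (fun _ => (1 : ℂ)) i).const_mul hbar
  have hV := tendsto_sub_mul_nhdsNE_zero (V.derivative.continuous_aeval.continuousAt (x := s i))
  have hK' : Tendsto K (𝓝[≠] s i) (𝓝 (K (s i))) :=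
    (hK.continuousOn.continuousAt hU_nhds).continuousWithinAt
  have hpole : Tendsto (fun x => (x - s i) * (1 / (x - x₀))) (𝓝[≠] s i) (𝓝 0) :=
    tendsto_sub_mul_nhdsNE_zero <| continuousAt_const.div
      (continuous_sub_right _).continuousAt (sub_ne_zero.2 (hx₀ i).symm)
  have hRHS := (((hω.const_mul 2).sub hV).mul hK').sub
    (hpole.add ((tendsto_sub_mul_sum_div_sub hs C i).const_mul 2))
  have hEq : (fun x => (x - s i) * (hbar * deriv K x)) =ᶠ[𝓝[≠] s i] fun x =>
      (2 * (hbar * ((x - s i) * ∑ k, 1 / (x - s k))) - (x - s i) * V.derivative.eval x) * K x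
        - ((x - s i) * (1 / (x - x₀)) + 2 * ((x - s i) * ∑ k, C k / (x - s k))) := by
    filter_upwards [eventually_nhdsNE_forall_ne hs i,
      eventually_nhdsWithin_of_eventually_nhds hU_nhds,
      eventually_nhdsWithin_of_eventually_nhds (eventually_ne_nhds (hx₀ i).symm)]
      with x hxs hxU hxx₀
    rw [hODE x hxU hxs hxx₀, hG]
    ring
  linear_combination -tendsto_nhds_unique (hLHS.congr' hEq) hRHS / 2
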